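/- Let $B > 0$, $u > 0$ and $l \in \mathbb{N}_0$, and let $\varphi_l(x) = \sqrt{\tfrac{B}{l!\,2\pi}}\,[\sqrt{\tfrac{B}{2}}\,(x_1 - \mathrm{i}x_2)]^{l}\, e^{-B|x|^2/4}$. Then in the delta-correlated limit the squared fall-off energy of the $l$-th Landau band takes the value $\lim_{\lambda \downarrow 0}\; \int_{\mathbb{R}^2}\!\int_{\mathbb{R}^2} |\varphi_l(x)|^2\; \frac{u^2}{2\pi\lambda^2}\, e^{-|x-y|^2/(2\lambda^2)}\; |\varphi_l(y)|^2\, dx\, dy \;=\; \frac{u^2 B}{4\pi}\, \frac{(2l)!}{(l!\,2^l)^2}$. -/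

import Mathlib

open MeasureTheory Real Filter

/-- The normalized state `φ_l(x) = √(B/(l! 2π)) [√(B/2)(x₁ - i x₂)]^l e^{-B|x|²/4}`
in the `l`-th Landau level. -/
noncomputable def phiLandau (B : ℝ) (l : ℕ) (x : ℝ × ℝ) : ℂ :=
  ((Real.sqrt (B / ((Nat.factorial l : ℝ) * (2 * Real.pi))) : ℝ) : ℂ) *
    (((Real.sqrt (B / 2) : ℝ) : ℂ) * ((x.1 : ℂ) - Complex.I * (x.2 : ℂ))) ^ l *
    Complex.exp (((-(B * (x.1 ^ 2 + x.2 ^ 2)) / 4 : ℝ) : ℂ))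

section Aux

open Set

/-- An auxiliary radial function on `ℝ × ℝ`. -/
noncomputable def rad (m : ℕ) (b : ℝ) (x : ℝ × ℝ) : ℝ :=
  (x.1 ^ 2 + x.2 ^ 2) ^ m * Real.exp (-b * (x.1 ^ 2 + x.2 ^ 2))

lemma rad_nonneg (m : ℕ) (b : ℝ) (x : ℝ × ℝ) : 0 ≤ rad m b x := by
  unfold rad; positivity

lemma rad_continuous (m : ℕ) (b : ℝ) : Continuous (rad m b) := by
  unfold rad; fun_prop

lemma rad_mul_self (m : ℕ) (b : ℝ) (x : ℝ × ℝ) :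
    rad m b x * rad m b x = rad (2*m) (2*b) x := by
  unfold rad
  rw [show 2*m = m + m from two_mul m, pow_add,
    show -(2*b) * (x.1^2+x.2^2) = -b * (x.1^2+x.2^2) + -b * (x.1^2+x.2^2) from by ring,
    Real.exp_add]
  ring

lemma pow_mul_exp_le (m : ℕ) {b t : ℝ} (hb : 0 < b) (ht : 0 ≤ t) :
    t ^ m * Real.exp (-b * t) ≤ m.factorial / b ^ m := by
  have h1 : (b*t) ^ m / m.factorial ≤ Real.exp (b*t) := by
    calc (b*t)^m / m.factorial ≤ ∑ i ∈ Finset.range (m+1), (b*t)^i / i.factorial := by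
          refine Finset.single_le_sum (f := fun i => (b*t)^i / i.factorial) ?_
            (Finset.self_mem_range_succ m)
          intro i _; positivity
      _ ≤ Real.exp (b*t) := by
          have := Real.sum_le_exp_of_nonneg (x := b*t) (by positivity) (m+1)
          simpa using this
  have h2 : t ^ m ≤ m.factorial / b^m * Real.exp (b*t) := by
    have := mul_le_mul_of_nonneg_left h1 (le_of_lt (show (0:ℝ) < m.factorial / b^m by positivity))
    calc t^m = m.factorial / b^m * ((b*t)^m / m.factorial) := by
          rw [mul_pow]; field_simp
      _ ≤ m.factorial / b^m * Real.exp (b*t) := this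
  calc t^m * Real.exp (-b*t) ≤ (m.factorial / b^m * Real.exp (b*t)) * Real.exp (-b*t) :=
        mul_le_mul_of_nonneg_right h2 (Real.exp_pos _).le
    _ = m.factorial / b^m := by rw [mul_assoc, ← Real.exp_add]; simp

lemma rad_le (m : ℕ) {b : ℝ} (hb : 0 < b) (x : ℝ × ℝ) :
    rad m b x ≤ m.factorial / (b/2) ^ m * Real.exp (-(b/2) * (x.1 ^ 2 + x.2 ^ 2)) := by
  unfold rad
  have h : (x.1^2+x.2^2) ^ m * Real.exp (-b * (x.1^2+x.2^2))
      = ((x.1^2+x.2^2) ^ m * Real.exp (-(b/2) * (x.1^2+x.2^2)))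
        * Real.exp (-(b/2) * (x.1^2+x.2^2)) := by
    rw [mul_assoc, ← Real.exp_add]; ring_nf
  rw [h]
  refine mul_le_mul_of_nonneg_right ?_ (Real.exp_pos _).le
  exact pow_mul_exp_le m (by positivity) (by positivity)

lemma rad_le_const (m : ℕ) {b : ℝ} (hb : 0 < b) (x : ℝ × ℝ) :
    rad m b x ≤ m.factorial / (b/2) ^ m := by
  refine (rad_le m hb x).trans ?_
  have h1 : Real.exp (-(b/2) * (x.1 ^ 2 + x.2 ^ 2)) ≤ 1 := by
    rw [Real.exp_le_one_iff]
    have : (0:ℝ) ≤ x.1^2 + x.2^2 := by positivity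
    nlinarith
  nlinarith [Real.exp_pos (-(b/2) * (x.1 ^ 2 + x.2 ^ 2)),
    (show (0:ℝ) < m.factorial / (b/2)^m by positivity)]

lemma integrable_rad (m : ℕ) {b : ℝ} (hb : 0 < b) : Integrable (rad m b) := by
  refine Integrable.mono' (g := fun x : ℝ × ℝ =>
    m.factorial / (b/2) ^ m * (Real.exp (-(b/2) * x.1^2) * Real.exp (-(b/2) * x.2^2))) ?_
    (rad_continuous m b).aestronglyMeasurable (ae_of_all _ fun x => ?_)
  · rw [Measure.volume_eq_prod]
    exact (((integrable_exp_neg_mul_sq (by positivity : (0:ℝ) < b/2)).mul_prod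
      (integrable_exp_neg_mul_sq (by positivity : (0:ℝ) < b/2)))).const_mul _
  · rw [Real.norm_eq_abs, abs_of_nonneg (rad_nonneg m b x)]
    calc rad m b x ≤ m.factorial / (b/2) ^ m * Real.exp (-(b/2) * (x.1^2 + x.2^2)) :=
          rad_le m hb x
      _ = m.factorial / (b/2) ^ m * (Real.exp (-(b/2) * x.1^2) * Real.exp (-(b/2) * x.2^2)) := by
          rw [← Real.exp_add]; ring_nf

lemma integral_rad_radial (m : ℕ) (b : ℝ) :
    ∫ x : ℝ × ℝ, rad m b x
      = 2 * π * ∫ r in Ioi (0:ℝ), r * (r^2)^m * Real.exp (-b * r^2) := by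
  rw [← integral_comp_polarCoord_symm]
  have h1 : ∀ p ∈ polarCoord.target,
      p.1 • rad m b (polarCoord.symm p) = p.1 * (p.1^2)^m * Real.exp (-b * p.1^2) := by
    rintro ⟨r, θ⟩ ⟨hr, hθ⟩
    simp only [polarCoord, OpenPartialHomeomorph.coe_mk_symm, PartialEquiv.coe_symm_mk, rad,
      smul_eq_mul]
    have : (r * Real.cos θ)^2 + (r * Real.sin θ)^2 = r^2 := by
      have := Real.sin_sq_add_cos_sq θ; nlinarith
    rw [this]; ring
  rw [setIntegral_congr_fun polarCoord.open_target.measurableSet h1]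
  have htarget : polarCoord.target = Ioi (0:ℝ) ×ˢ Ioo (-π) π := rfl
  rw [htarget]
  have key := MeasureTheory.setIntegral_prod_mul (μ := (volume : Measure ℝ))
    (ν := (volume : Measure ℝ)) (fun r : ℝ => r * (r^2)^m * Real.exp (-b * r^2))
    (fun _ : ℝ => (1:ℝ)) (Ioi 0) (Ioo (-π) π)
  rw [Measure.volume_eq_prod]
  rw [show (fun p : ℝ × ℝ => p.1 * (p.1^2)^m * Real.exp (-b * p.1^2))
      = fun p : ℝ × ℝ => (fun r : ℝ => r * (r^2)^m * Real.exp (-b * r^2)) p.1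
          * (fun _ : ℝ => (1:ℝ)) p.2 from by funext p; simp]
  rw [key]
  simp [Real.volume_Ioo]
  rw [max_eq_left (by positivity)]
  ring

lemma integral_radial_moment (m : ℕ) {b : ℝ} (hb : 0 < b) :
    ∫ r in Ioi (0:ℝ), r * (r^2)^m * Real.exp (-b * r^2)
      = m.factorial / (2 * b^(m+1)) := by
  have h1 : ∀ r ∈ Ioi (0:ℝ), r * (r^2)^m * Real.exp (-b * r^2)
      = r ^ ((2*m+1 : ℕ) : ℝ) * Real.exp (-b * r ^ (2:ℝ)) := by
    intro r hr
    rw [Real.rpow_natCast, Real.rpow_two]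
    ring_nf
  rw [setIntegral_congr_fun measurableSet_Ioi h1,
    integral_rpow_mul_exp_neg_mul_rpow (by norm_num)
      (by push_cast; linarith [Nat.cast_nonneg (α := ℝ) m]) hb]
  have h0 : ((2*m+1:ℕ):ℝ) + 1 = 2*(m+1) := by push_cast; ring
  rw [h0]
  have h2 : (-(2*((m:ℝ)+1))/2) = -((m:ℝ)+1) := by ring
  rw [h2, Real.rpow_neg hb.le]
  have h3 : (b:ℝ) ^ ((m:ℝ)+1) = b ^ (m+1) := by
    rw [← Real.rpow_natCast b (m+1)]; push_cast; ring_nf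
  have h4 : (2*((m:ℝ)+1))/2 = (m:ℝ)+1 := by ring
  rw [h3, h4]
  have h5 : Real.Gamma ((m:ℝ)+1) = m.factorial := Real.Gamma_nat_eq_factorial m
  rw [h5]
  rw [eq_div_iff (by positivity)]
  field_simp

lemma integral_rad (m : ℕ) {b : ℝ} (hb : 0 < b) :
    ∫ x : ℝ × ℝ, rad m b x = π * m.factorial / b^(m+1) := by
  rw [integral_rad_radial, integral_radial_moment m hb]
  field_simp

lemma abs_phi_sq (B : ℝ) (hB : 0 < B) (l : ℕ) (x : ℝ × ℝ) :
    ‖phiLandau B l x‖ ^ 2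
      = (B / (l.factorial * (2 * π)) * (B/2)^l) * rad l (B/2) x := by
  have hpi := Real.pi_pos
  unfold phiLandau rad
  rw [norm_mul, norm_mul, norm_pow, norm_mul, Complex.norm_real, Complex.norm_real,
    Real.norm_eq_abs, Real.norm_eq_abs, Complex.norm_exp]
  have h1 : ‖(x.1:ℂ) - Complex.I * (x.2:ℂ)‖ ^ 2 = x.1^2 + x.2^2 := by
    rw [Complex.sq_norm, Complex.normSq_apply]
    simp
    ring
  have h2 : |Real.sqrt (B / (l.factorial * (2 * π)))| ^ 2 = B / (l.factorial * (2 * π)) := by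
    rw [sq_abs, Real.sq_sqrt (by positivity)]
  have h3 : |Real.sqrt (B / 2)| ^ 2 = B / 2 := by
    rw [sq_abs, Real.sq_sqrt (by positivity)]
  rw [mul_pow, mul_pow, ← pow_mul, mul_comm l 2, pow_mul, mul_pow, h1, h2, h3]
  rw [show ((( -(B * (x.1 ^ 2 + x.2 ^ 2)) / 4 : ℝ) : ℂ)).re = -(B * (x.1 ^ 2 + x.2 ^ 2)) / 4
    from by simp [← Complex.ofReal_pow]]
  rw [← Real.exp_nat_mul]
  rw [show Real.exp ((2:ℕ) * (-(B * (x.1 ^ 2 + x.2 ^ 2)) / 4))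
      = Real.exp (-(B/2) * (x.1 ^ 2 + x.2 ^ 2)) from by congr 1; push_cast; ring]
  rw [mul_pow]
  ring

end Aux

/-- In the delta-correlated limit `λ ↓ 0` of a two-dimensional Gaussian random potential
with covariance `C(x) = u²(2πλ²)⁻¹ e^{-|x|²/(2λ²)}`, the squared fall-off energy of the
`l`-th Landau band (the fall-off-energy functional at the maximizer `φ_l`) tends to
`(u²B/4π) (2l)!/(l! 2^l)²`. -/
theorem falloff_energy_delta_correlated_limit (B u : ℝ) (hB : 0 < B) (hu : 0 < u)
    (l : ℕ) :
    Tendsto (fun lam : ℝ =>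
        ∫ x : ℝ × ℝ, ∫ y : ℝ × ℝ,
          ‖phiLandau B l x‖ ^ 2 *
            (u ^ 2 / (2 * Real.pi * lam ^ 2) *
              Real.exp (-((x.1 - y.1) ^ 2 + (x.2 - y.2) ^ 2) / (2 * lam ^ 2))) *
            ‖phiLandau B l y‖ ^ 2)
      (nhdsWithin 0 (Set.Ioi 0))
      (nhds (u ^ 2 * B / (4 * Real.pi) *
        ((Nat.factorial (2 * l) : ℝ) / ((Nat.factorial l : ℝ) * 2 ^ l) ^ 2))) := by
  have hpi := Real.pi_pos
  have hfac : (0:ℝ) < l.factorial := by exact_mod_cast l.factorial_pos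
  set c : ℝ := B / (l.factorial * (2 * π)) * (B/2)^l with hc
  have hc0 : 0 < c := by positivity
  set f : ℝ × ℝ → ℝ := rad l (B/2) with hfdef
  set g : ℝ × ℝ → ℝ := rad 0 (1/2) with hgdef
  set Mf : ℝ := l.factorial / (B/4) ^ l with hMf
  have hMf0 : 0 < Mf := by positivity
  have hf_le : ∀ x, f x ≤ Mf := by
    intro x
    have := rad_le_const l (show (0:ℝ) < B/2 by positivity) x
    rw [show (B/2)/2 = B/4 from by ring] at this
    exact this
  have hf_int : Integrable f := integrable_rad l (by positivity)
  have hg_int : Integrable g := integrable_rad 0 (by positivity)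
  have hf_cont : Continuous f := rad_continuous _ _
  have hg_cont : Continuous g := rad_continuous _ _
  have hf_nn : ∀ x, 0 ≤ f x := rad_nonneg _ _
  have hg_nn : ∀ x, 0 ≤ g x := rad_nonneg _ _
  set H : ℝ → (ℝ×ℝ) × (ℝ×ℝ) → ℝ :=
    fun lam p => f p.1 * (g p.2 * f (p.1 + lam • p.2)) with hH
  set bound : (ℝ×ℝ) × (ℝ×ℝ) → ℝ := fun p => Mf * (f p.1 * g p.2) with hbound
  have hbound_int : Integrable bound := by
    rw [hbound, Measure.volume_eq_prod]
    exact ((hf_int.mul_prod hg_int)).const_mul Mf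
  have hH_cont : ∀ lam, Continuous (H lam) := by
    intro lam
    exact (hf_cont.comp continuous_fst).mul
      ((hg_cont.comp continuous_snd).mul
        (hf_cont.comp (continuous_fst.add (continuous_snd.const_smul lam))))
  have hH_bound : ∀ lam, ∀ p, ‖H lam p‖ ≤ bound p := by
    intro lam p
    rw [Real.norm_eq_abs, abs_of_nonneg
      (by exact mul_nonneg (hf_nn _) (mul_nonneg (hg_nn _) (hf_nn _)))]
    have h1 : g p.2 * f (p.1+lam•p.2) ≤ g p.2 * Mf :=
      mul_le_mul_of_nonneg_left (hf_le _) (hg_nn _)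
    calc f p.1 * (g p.2 * f (p.1+lam•p.2)) ≤ f p.1 * (g p.2 * Mf) :=
          mul_le_mul_of_nonneg_left h1 (hf_nn _)
      _ = Mf * (f p.1 * g p.2) := by ring
  have hH_int : ∀ lam, Integrable (H lam) := fun lam =>
    hbound_int.mono' (hH_cont lam).aestronglyMeasurable (ae_of_all _ (hH_bound lam))
  -- convergence of the main integral
  have hJ : Tendsto (fun lam => ∫ p : (ℝ×ℝ)×(ℝ×ℝ), H lam p) (nhdsWithin 0 (Set.Ioi 0))
      (nhds (∫ p : (ℝ×ℝ)×(ℝ×ℝ), f p.1 * (g p.2 * f p.1))) := by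
    refine tendsto_integral_filter_of_dominated_convergence bound
      (Eventually.of_forall fun lam => (hH_cont lam).aestronglyMeasurable)
      (Eventually.of_forall fun lam => ae_of_all _ (hH_bound lam)) hbound_int
      (ae_of_all _ fun p => ?_)
    have hcont : Continuous (fun lam : ℝ => H lam p) := by
      apply continuous_const.mul
      exact continuous_const.mul
        (hf_cont.comp (continuous_const.add (continuous_id.smul continuous_const)))
    have h0 : H 0 p = f p.1 * (g p.2 * f p.1) := by simp [hH]
    have := hcont.tendsto 0
    rw [h0] at this
    exact this.mono_left nhdsWithin_le_nhds
  -- value of the limit integral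
  have hval : (∫ p : (ℝ×ℝ)×(ℝ×ℝ), f p.1 * (g p.2 * f p.1))
      = (π * (2*l).factorial / B^(2*l+1)) * (2*π) := by
    have h1 : (fun p : (ℝ×ℝ)×(ℝ×ℝ) => f p.1 * (g p.2 * f p.1))
        = fun p : (ℝ×ℝ)×(ℝ×ℝ) => (fun x => rad (2*l) B x) p.1 * (fun z => g z) p.2 := by
      funext p
      simp only
      rw [show f p.1 * (g p.2 * f p.1) = (f p.1 * f p.1) * g p.2 from by ring, hfdef,
        rad_mul_self, show (2:ℝ)*(B/2) = B from by ring]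
    rw [h1, Measure.volume_eq_prod, integral_prod_mul,
      integral_rad (2*l) hB, hgdef, integral_rad 0 (by norm_num : (0:ℝ) < 1/2)]
    norm_num
    exact Or.inl (by ring)
  -- the model function and eventual equality
  have key : ∀ lam : ℝ, lam ∈ Set.Ioi (0:ℝ) →
      (c^2 * u^2 / (2*π)) * ∫ p : (ℝ×ℝ)×(ℝ×ℝ), H lam p
        = ∫ x : ℝ × ℝ, ∫ y : ℝ × ℝ,
            ‖phiLandau B l x‖ ^ 2 *
              (u ^ 2 / (2 * Real.pi * lam ^ 2) *
                Real.exp (-((x.1 - y.1) ^ 2 + (x.2 - y.2) ^ 2) / (2 * lam ^ 2))) *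
              ‖phiLandau B l y‖ ^ 2 := by
    intro lam hlam
    rw [Set.mem_Ioi] at hlam
    have hlam0 : lam ≠ 0 := ne_of_gt hlam
    -- inner integral computation
    have inner_eq : ∀ x : ℝ × ℝ,
        (∫ y : ℝ × ℝ, ‖phiLandau B l x‖ ^ 2 *
            (u ^ 2 / (2 * Real.pi * lam ^ 2) *
              Real.exp (-((x.1 - y.1) ^ 2 + (x.2 - y.2) ^ 2) / (2 * lam ^ 2))) *
            ‖phiLandau B l y‖ ^ 2)
          = (c^2 * u^2 / (2*π)) * ∫ z : ℝ × ℝ, f x * (g z * f (x + lam • z)) := by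
      intro x
      have step1 : ∀ y : ℝ × ℝ,
          ‖phiLandau B l x‖ ^ 2 *
            (u ^ 2 / (2 * Real.pi * lam ^ 2) *
              Real.exp (-((x.1 - y.1) ^ 2 + (x.2 - y.2) ^ 2) / (2 * lam ^ 2))) *
            ‖phiLandau B l y‖ ^ 2
          = (c^2 * u^2 / (2*π*lam^2) * f x) *
              (Real.exp (-((x.1 - y.1) ^ 2 + (x.2 - y.2) ^ 2) / (2 * lam ^ 2)) * f y) := by
        intro y
        rw [abs_phi_sq B hB l x, abs_phi_sq B hB l y, ← hc, ← hfdef]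
        ring
      simp only [step1]
      rw [integral_const_mul]
      -- translation
      have step2 : (∫ y : ℝ × ℝ,
          Real.exp (-((x.1 - y.1) ^ 2 + (x.2 - y.2) ^ 2) / (2 * lam ^ 2)) * f y)
          = ∫ w : ℝ × ℝ, Real.exp (-(w.1 ^ 2 + w.2 ^ 2) / (2 * lam ^ 2)) * f (x + w) := by
        rw [← integral_add_left_eq_self (fun y : ℝ × ℝ =>
          Real.exp (-((x.1 - y.1) ^ 2 + (x.2 - y.2) ^ 2) / (2 * lam ^ 2)) * f y) x]
        congr 1
        funext w
        have e1 : (x.1 - (x + w).1) ^ 2 = w.1 ^ 2 := by simp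
        have e2 : (x.2 - (x + w).2) ^ 2 = w.2 ^ 2 := by simp
        rw [e1, e2]
      rw [step2]
      -- scaling
      have step3 : (∫ w : ℝ × ℝ, Real.exp (-(w.1 ^ 2 + w.2 ^ 2) / (2 * lam ^ 2)) * f (x + w))
          = lam^2 * ∫ z : ℝ × ℝ, g z * f (x + lam • z) := by
        have hs := MeasureTheory.Measure.integral_comp_smul (μ := (volume : Measure (ℝ×ℝ)))
          (fun w : ℝ × ℝ => Real.exp (-(w.1 ^ 2 + w.2 ^ 2) / (2 * lam ^ 2)) * f (x + w)) lam
        have hrank : Module.finrank ℝ (ℝ × ℝ) = 2 := by simp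
        rw [hrank] at hs
        have habs : |((lam ^ 2)⁻¹ : ℝ)| = (lam^2)⁻¹ := by
          rw [abs_of_nonneg]; positivity
        rw [habs, smul_eq_mul] at hs
        have hs2 : ∀ z : ℝ × ℝ,
            Real.exp (-((lam • z).1 ^ 2 + (lam • z).2 ^ 2) / (2 * lam ^ 2)) * f (x + lam • z)
            = g z * f (x + lam • z) := by
          intro z
          congr 1
          rw [hgdef]
          unfold rad
          rw [pow_zero, one_mul]
          congr 1
          have : (lam • z).1 = lam * z.1 ∧ (lam • z).2 = lam * z.2 := ⟨rfl, rfl⟩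
          rw [this.1, this.2]
          field_simp
        simp only [hs2] at hs
        rw [hs, ← mul_assoc, mul_inv_cancel₀ (by positivity : (lam^2:ℝ) ≠ 0), one_mul]
      rw [step3]
      rw [show c ^ 2 * u ^ 2 / (2 * π * lam ^ 2) * f x *
            (lam ^ 2 * ∫ z : ℝ × ℝ, g z * f (x + lam • z))
          = (c^2 * u^2 / (2*π)) * (f x * ∫ z : ℝ × ℝ, g z * f (x + lam • z)) from by
        field_simp]
      rw [← integral_const_mul]
    rw [show (∫ x : ℝ × ℝ, ∫ y : ℝ × ℝ,
        ‖phiLandau B l x‖ ^ 2 *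
          (u ^ 2 / (2 * Real.pi * lam ^ 2) *
            Real.exp (-((x.1 - y.1) ^ 2 + (x.2 - y.2) ^ 2) / (2 * lam ^ 2))) *
          ‖phiLandau B l y‖ ^ 2)
      = ∫ x : ℝ × ℝ, (c^2 * u^2 / (2*π)) * ∫ z : ℝ × ℝ, f x * (g z * f (x + lam • z)) from by
        congr 1; funext x; exact inner_eq x]
    rw [integral_const_mul]
    congr 1
    have hint : Integrable (Function.uncurry
        (fun x z : ℝ × ℝ => f x * (g z * f (x + lam • z)))) ((volume : Measure (ℝ×ℝ)).prod volume) := by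
      rw [← Measure.volume_eq_prod]
      exact hH_int lam
    have := MeasureTheory.integral_integral hint
    rw [this, ← Measure.volume_eq_prod]
  -- final assembly
  have harith : (c^2 * u^2 / (2*π)) * ((π * (2*l).factorial / B^(2*l+1)) * (2*π))
      = u ^ 2 * B / (4 * Real.pi) *
        ((Nat.factorial (2 * l) : ℝ) / ((Nat.factorial l : ℝ) * 2 ^ l) ^ 2) := by
    rw [hc]
    have h2 : ((B:ℝ)/2)^l = B^l / 2^l := div_pow B 2 l
    rw [h2]
    have hBl : (B:ℝ)^(2*l+1) ≠ 0 := by positivity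
    have h2l : ((2:ℝ))^l ≠ 0 := by positivity
    field_simp
    ring
  have final := (hJ.const_mul (c^2 * u^2 / (2*π))).congr'
    (eventually_mem_nhdsWithin.mono key)
  rw [hval, harith] at final
  exact final
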